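/- arXiv:0903.4550 — 8 statements merged into one kernel-verified Lean document; each statement's English description precedes it below -/
import Mathlib

section
/- Assume Φ(x) < ∞ for all x ∈ ℝ, Φ(x) → ∞ as x → ∞, and set Φμ = Φ(μ) (which lies in (0,∞)). Define the weight function h(x) = (2F₀(x) − 1) · exp(−Φ(x)/Φμ) / (4 Φμ² σ(x)² f₀(x)⁴) for x ≥ μ. Then for every continuous function g : ℝ → ℝ one has the identity (of Lebesgue integrals with values in [0,∞]): 4 ∫_{μ}^{∞} h(x) f₀(x)³ g(Φ(x))² dx = (1/Φμ) ∫_{1}^{∞} g(v·Φμ)² e^{−v} dv. -/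
/-! For `x ≥ μ` the integrands of `Φ x` and `Φ μ` differ only on `(μ, x]`, where
`F₀² = (1 - F₀)² + (2F₀ - 1)`; hence `Φ x = Φμ + ∫_μ^x w` with `w = (2F₀ - 1) / (σ² f₀) ≥ 0`.
So `Φ` maps `[μ, ∞)` continuously and monotonically onto `[Φμ, ∞)` with derivative `w`, and
`4 h f₀³ = w e^{-Φ/Φμ} / Φμ²`: the identity is the substitution `u = Φ x` followed by
`u = v Φμ`. -/

open MeasureTheory Set Filter Topology ENNReal

theorem integral_Iic_eq_add_intervalIntegral {f : ℝ → ℝ} (hf : Integrable f) (a b : ℝ) :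
    ∫ y in Iic b, f y = (∫ y in Iic a, f y) + ∫ y in a..b, f y := by
  rw [← intervalIntegral.integral_Iic_sub_Iic hf.integrableOn hf.integrableOn]
  exact (add_sub_cancel _ _).symm

theorem continuous_integral_Iic {f : ℝ → ℝ} (hf : Integrable f) :
    Continuous fun x => ∫ y in Iic x, f y :=
  (continuous_const.add (intervalIntegral.continuous_primitive
    (fun _ _ => hf.intervalIntegrable) 0)).congr
    fun x => (integral_Iic_eq_add_intervalIntegral hf 0 x).symm

theorem monotone_integral_Iic {f : ℝ → ℝ} (hf : Integrable f) (hf_nonneg : ∀ x, 0 ≤ f x) :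
    Monotone fun x => ∫ y in Iic x, f y := fun a b hab => by
  dsimp only
  rw [integral_Iic_eq_add_intervalIntegral hf a b, le_add_iff_nonneg_right]
  exact intervalIntegral.integral_nonneg hab fun y _ => hf_nonneg y

theorem tendsto_toReal_atTop_of_tendsto_top {α : Type*} {l : Filter α} {f : α → ℝ≥0∞}
    (hf : ∀ x, f x ≠ ⊤) (h : Tendsto f l (𝓝 ⊤)) : Tendsto (fun x => (f x).toReal) l atTop :=
  tendsto_atTop.2 fun _ => (h.eventually (eventually_gt_nhds ofReal_lt_top)).mono
    fun x hx => (ofReal_le_iff_le_toReal (hf x)).1 hx.le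

theorem ofReal_sq_indicator_Ioi_sub_div_eq_add {F d : ℝ} {a b y : ℝ} (hab : a ≤ b)
    (hF : y ∈ Ioc a b → 1 / 2 ≤ F) (hd : y ∈ Ioc a b → 0 ≤ d) :
    ENNReal.ofReal (((Ioi b).indicator (fun _ => (1 : ℝ)) y - F) ^ 2 / d) =
      ENNReal.ofReal (((Ioi a).indicator (fun _ => (1 : ℝ)) y - F) ^ 2 / d) +
        (Ioc a b).indicator (fun _ => ENNReal.ofReal ((2 * F - 1) / d)) y := by
  rcases le_or_gt y a with hya | hay
  · simp [hya, hya.trans hab]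
  rcases le_or_gt y b with hyb | hby
  · have hy : y ∈ Ioc a b := ⟨hay, hyb⟩
    rw [indicator_of_mem hy, indicator_of_notMem (notMem_Ioi.2 hyb),
      indicator_of_mem (mem_Ioi.2 hay), ← ENNReal.ofReal_add (div_nonneg (sq_nonneg _) (hd hy))
        (div_nonneg (by linarith [hF hy]) (hd hy))]
    congr 1
    ring
  · simp [hby, hay]

theorem lintegral_sq_indicator_Ioi_sub_div_eq_add {F d : ℝ → ℝ} {a b : ℝ} (hab : a ≤ b)
    (hF : Measurable F) (hd : Measurable d) (hF_half : ∀ y ∈ Ioc a b, 1 / 2 ≤ F y)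
    (hd_nonneg : ∀ y ∈ Ioc a b, 0 ≤ d y) :
    ∫⁻ y, ENNReal.ofReal (((Ioi b).indicator (fun _ => (1 : ℝ)) y - F y) ^ 2 / d y) =
      (∫⁻ y, ENNReal.ofReal (((Ioi a).indicator (fun _ => (1 : ℝ)) y - F y) ^ 2 / d y)) +
        ∫⁻ y in Ioc a b, ENNReal.ofReal ((2 * F y - 1) / d y) := by
  have hw : Measurable fun y => (2 * F y - 1) / d y := by fun_prop
  rw [← lintegral_indicator measurableSet_Ioc,
    ← lintegral_add_right _ (hw.ennreal_ofReal.indicator measurableSet_Ioc)]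
  exact lintegral_congr fun y =>
    ofReal_sq_indicator_Ioi_sub_div_eq_add hab (hF_half y) (hd_nonneg y)

theorem toReal_lintegral_sq_indicator_Ioi_sub_div_eq_add {F d : ℝ → ℝ} {a b : ℝ} (hab : a ≤ b)
    (hF : Measurable F) (hd : Measurable d) (hF_half : ∀ y ∈ Ioc a b, 1 / 2 ≤ F y)
    (hd_nonneg : ∀ y ∈ Ioc a b, 0 ≤ d y)
    (hfin : ∫⁻ y, ENNReal.ofReal (((Ioi b).indicator (fun _ => (1 : ℝ)) y - F y) ^ 2 / d y) ≠ ⊤) :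
    (∫⁻ y, ENNReal.ofReal (((Ioi b).indicator (fun _ => (1 : ℝ)) y - F y) ^ 2 / d y)).toReal =
      (∫⁻ y, ENNReal.ofReal (((Ioi a).indicator (fun _ => (1 : ℝ)) y - F y) ^ 2 / d y)).toReal +
        ∫ y in a..b, (2 * F y - 1) / d y := by
  rw [lintegral_sq_indicator_Ioi_sub_div_eq_add hab hF hd hF_half hd_nonneg] at hfin ⊢
  rw [ENNReal.toReal_add (ENNReal.add_ne_top.1 hfin).1 (ENNReal.add_ne_top.1 hfin).2,
    intervalIntegral.integral_of_le hab, integral_eq_lintegral_of_nonneg_ae]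
  · exact (ae_restrict_iff' measurableSet_Ioc).2 <| .of_forall fun y hy =>
      div_nonneg (by linarith [hF_half y hy]) (hd_nonneg y hy)
  · exact Measurable.aestronglyMeasurable (by fun_prop)

theorem lintegral_Ici_comp_eq_of_eq_add_integral {φ w : ℝ → ℝ} {a c : ℝ} (hw : Continuous w)
    (hw_nonneg : ∀ x, a ≤ x → 0 ≤ w x) (hφ : ∀ x, a ≤ x → φ x = c + ∫ y in a..x, w y)
    (hφ_top : Tendsto φ atTop atTop) (G : ℝ → ℝ≥0∞) :
    ∫⁻ x in Ici a, ENNReal.ofReal (w x) * G (φ x) = ∫⁻ u in Ici c, G u := by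
  have hφa : φ a = c := by simpa using hφ a le_rfl
  have hderiv : ∀ x ∈ Ici a, HasDerivWithinAt φ (w x) (Ici a) x := fun x hx =>
    ((intervalIntegral.integral_hasDerivAt_right (hw.intervalIntegrable a x)
      (hw.stronglyMeasurableAtFilter _ _) hw.continuousAt).const_add c).hasDerivWithinAt.congr
      hφ (hφ x hx)
  have hmono : MonotoneOn φ (Ici a) := fun x hx y hy hxy => by
    rw [hφ x hx, hφ y hy, ← intervalIntegral.integral_add_adjacent_intervals
      (hw.intervalIntegrable a x) (hw.intervalIntegrable x y)]
    have := intervalIntegral.integral_nonneg (μ := volume) hxy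
      fun t ht => hw_nonneg t (le_trans hx ht.1)
    linarith
  have himage : φ '' Ici a = Ici c := hφa ▸ ContinuousOn.image_Ici_of_monotoneOn
    (fun x hx => (hderiv x hx).continuousWithinAt) hmono hφ_top
  rw [← himage,
    lintegral_image_eq_lintegral_deriv_mul_of_monotoneOn measurableSet_Ici hderiv hmono]

theorem setLIntegral_Ici_eq_mul_setLIntegral_Ici_one {c : ℝ} (hc : 0 < c) (G : ℝ → ℝ≥0∞) :
    ∫⁻ u in Ici c, G u = ENNReal.ofReal c * ∫⁻ v in Ici 1, G (v * c) := by
  rw [← lintegral_const_mul' _ _ ofReal_ne_top]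
  refine (lintegral_Ici_comp_eq_of_eq_add_integral continuous_const (fun _ _ => hc.le)
    (fun v _ => ?_) (tendsto_id.atTop_mul_const hc) G).symm
  simp only [id, intervalIntegral.integral_const, smul_eq_mul]
  ring

theorem stmt_0_general
    (σ f₀ : ℝ → ℝ)
    (hσc : Continuous σ) (hσpos : ∀ x, 0 < σ x)
    (hf₀c : Continuous f₀) (hf₀pos : ∀ x, 0 < f₀ x)
    (hf₀int : ∫ x, f₀ x = 1)
    (F₀ : ℝ → ℝ) (hF₀ : ∀ x, F₀ x = ∫ y in Iic x, f₀ y)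
    (μ : ℝ) (hμ : F₀ μ = 1 / 2)
    (Φ : ℝ → ℝ≥0∞)
    (hΦ : ∀ x, Φ x = ∫⁻ y, ENNReal.ofReal
        (((Ioi x).indicator (fun _ => (1 : ℝ)) y - F₀ y) ^ 2 / (σ y ^ 2 * f₀ y)))
    (hΦfin : ∀ x, Φ x < ⊤)
    (hΦtop : Tendsto Φ atTop (𝓝 ⊤))
    (Φμ : ℝ) (hΦμ : Φμ = (Φ μ).toReal) (hΦμpos : 0 < Φμ)
    (h : ℝ → ℝ)
    (hh : ∀ x, μ ≤ x →
      h x = (2 * F₀ x - 1) * Real.exp (-(Φ x).toReal / Φμ) /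
        (4 * Φμ ^ 2 * σ x ^ 2 * f₀ x ^ 4))
    (g : ℝ → ℝ) :
    4 * ∫⁻ x in Ici μ,
        ENNReal.ofReal (h x * f₀ x ^ 3 * g ((Φ x).toReal) ^ 2)
      = ENNReal.ofReal (1 / Φμ) *
        ∫⁻ v in Ici (1 : ℝ),
          ENNReal.ofReal (g (v * Φμ) ^ 2 * Real.exp (-v)) := by
  have hF₀_eq : F₀ = fun x => ∫ y in Iic x, f₀ y := funext hF₀
  have hf₀_int : Integrable f₀ := integrable_of_integral_eq_one hf₀int
  have hF₀_cont : Continuous F₀ := hF₀_eq ▸ continuous_integral_Iic hf₀_int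
  have hF₀_half : ∀ x, μ ≤ x → 1 / 2 ≤ F₀ x := fun x hx =>
    hμ ▸ hF₀_eq ▸ monotone_integral_Iic hf₀_int (fun y => (hf₀pos y).le) hx
  have hd_pos : ∀ y, 0 < σ y ^ 2 * f₀ y := fun y => mul_pos (pow_pos (hσpos y) 2) (hf₀pos y)
  set w : ℝ → ℝ := fun y => (2 * F₀ y - 1) / (σ y ^ 2 * f₀ y)
  have hw_cont : Continuous w :=
    Continuous.div (by fun_prop) (by fun_prop) fun y => (hd_pos y).ne'
  have hw_nonneg : ∀ x, μ ≤ x → 0 ≤ w x := fun x hx =>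
    div_nonneg (by linarith [hF₀_half x hx]) (hd_pos x).le
  have hφ : ∀ x, μ ≤ x → (Φ x).toReal = Φμ + ∫ y in μ..x, w y := fun x hx => by
    rw [hΦμ, hΦ, hΦ]
    exact toReal_lintegral_sq_indicator_Ioi_sub_div_eq_add hx hF₀_cont.measurable (by fun_prop)
      (fun y hy => hF₀_half y hy.1.le) (fun y _ => (hd_pos y).le) (hΦ x ▸ (hΦfin x).ne)
  have hφ_top : Tendsto (fun x => (Φ x).toReal) atTop atTop :=
    tendsto_toReal_atTop_of_tendsto_top (fun x => (hΦfin x).ne) hΦtop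
  set G : ℝ → ℝ≥0∞ := fun u =>
    ENNReal.ofReal (1 / Φμ ^ 2) * ENNReal.ofReal (g u ^ 2 * Real.exp (-u / Φμ))
  calc 4 * ∫⁻ x in Ici μ, ENNReal.ofReal (h x * f₀ x ^ 3 * g ((Φ x).toReal) ^ 2)
      = ∫⁻ x in Ici μ, ENNReal.ofReal (w x) * G (Φ x).toReal := by
        rw [← lintegral_const_mul' _ _ (by simp)]
        refine setLIntegral_congr_fun measurableSet_Ici fun x hx => ?_
        have := hσpos x; have := hf₀pos x
        simp only [G]
        rw [hh x hx, ← ofReal_mul (by positivity : (0 : ℝ) ≤ 1 / Φμ ^ 2),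
          ← ofReal_mul (hw_nonneg x hx),
          show (4 : ℝ≥0∞) = ENNReal.ofReal 4 by simp, ← ofReal_mul (by positivity)]
        congr 1
        simp only [w]
        field_simp
    _ = ∫⁻ u in Ici Φμ, G u :=
        lintegral_Ici_comp_eq_of_eq_add_integral hw_cont hw_nonneg hφ hφ_top G
    _ = ENNReal.ofReal Φμ * ∫⁻ v in Ici 1, G (v * Φμ) :=
        setLIntegral_Ici_eq_mul_setLIntegral_Ici_one hΦμpos G
    _ = _ := by
        rw [lintegral_const_mul' _ _ ofReal_ne_top, ← mul_assoc, ← ofReal_mul hΦμpos.le]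
        congr 2
        · field_simp
        · ext v
          rw [neg_div, mul_div_cancel_right₀ _ hΦμpos.ne']

theorem stmt_0
    (σ f₀ : ℝ → ℝ)
    (hσc : Continuous σ) (hσpos : ∀ x, 0 < σ x)
    (hf₀c : Continuous f₀) (hf₀pos : ∀ x, 0 < f₀ x)
    (hf₀int : ∫ x, f₀ x = 1)
    (F₀ : ℝ → ℝ) (hF₀ : ∀ x, F₀ x = ∫ y in Iic x, f₀ y)
    (μ : ℝ) (hμ : F₀ μ = 1 / 2)
    (Φ : ℝ → ℝ≥0∞)
    (hΦ : ∀ x, Φ x = ∫⁻ y, ENNReal.ofReal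
        (((Ioi x).indicator (fun _ => (1 : ℝ)) y - F₀ y) ^ 2 / (σ y ^ 2 * f₀ y)))
    (hΦfin : ∀ x, Φ x < ⊤)
    (hΦtop : Tendsto Φ atTop (𝓝 ⊤))
    (Φμ : ℝ) (hΦμ : Φμ = (Φ μ).toReal) (hΦμpos : 0 < Φμ)
    (h : ℝ → ℝ)
    (hh : ∀ x, μ ≤ x →
      h x = (2 * F₀ x - 1) * Real.exp (-(Φ x).toReal / Φμ) /
        (4 * Φμ ^ 2 * σ x ^ 2 * f₀ x ^ 4))
    (g : ℝ → ℝ) (hg : Continuous g) :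
    4 * ∫⁻ x in Ici μ,
        ENNReal.ofReal (h x * f₀ x ^ 3 * g ((Φ x).toReal) ^ 2)
      = ENNReal.ofReal (1 / Φμ) *
        ∫⁻ v in Ici (1 : ℝ),
          ENNReal.ofReal (g (v * Φμ) ^ 2 * Real.exp (-v)) :=
  stmt_0_general σ f₀ hσc hσpos hf₀c hf₀pos hf₀int F₀ hF₀ μ hμ Φ hΦ hΦfin hΦtop Φμ hΦμ hΦμpos h hh g
end

section
/- If Φ(x) < ∞ for all x ∈ ℝ, then Φ is strictly decreasing on (−∞, μ] and strictly increasing on [μ, ∞), where μ is the median of F₀. -/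
/-! The integrands of `Φ x₁` and `Φ x₂` (for `x₁ < x₂`) agree off `(x₁, x₂]`, and on `(x₁, x₂]`
they are `(1 - F₀)² / w` and `F₀² / w` with `w = σ² f₀ > 0`. Their difference has the sign of
`2 F₀ - 1`, which is negative left of the median and positive right of it because `F₀` is strictly
increasing. Finiteness of `Φ` turns the pointwise comparison into a strict one of the integrals. -/

open MeasureTheory Set ENNReal

theorem strictMono_integral_Iic {f : ℝ → ℝ} (hf : Integrable f) (hpos : ∀ x, 0 < f x) :
    StrictMono fun x => ∫ y in Iic x, f y := by
  intro a b hab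
  have hdiff := intervalIntegral.integral_Iic_sub_Iic (a := a) (b := b) hf.integrableOn
    hf.integrableOn
  have hmid := intervalIntegral.intervalIntegral_pos_of_pos hf.intervalIntegrable hpos hab
  dsimp only
  linarith

theorem sq_indicator_Ioi_sub_sub_sq {x₁ x₂ : ℝ} (hx : x₁ ≤ x₂) (y c : ℝ) :
    ((Ioi x₂).indicator (fun _ => (1 : ℝ)) y - c) ^ 2
      - ((Ioi x₁).indicator (fun _ => (1 : ℝ)) y - c) ^ 2
      = (Ioc x₁ x₂).indicator (fun _ => 2 * c - 1) y := by
  by_cases h₂ : x₂ < y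
  · have h₁ : x₁ < y := hx.trans_lt h₂
    simp [h₁, h₂, not_le.2 h₂]
  · by_cases h₁ : x₁ < y
    · rw [indicator_of_notMem (s := Ioi x₂) h₂, indicator_of_mem (s := Ioi x₁) h₁,
        indicator_of_mem (s := Ioc x₁ x₂) ⟨h₁, not_lt.1 h₂⟩]
      ring
    · simp [h₁, h₂]

theorem lintegral_ofReal_lt_of_le_of_lt_on {α : Type*} [MeasurableSpace α] {ν : Measure α}
    {f g : α → ℝ} (hg : AEMeasurable g ν) (hfi : ∫⁻ x, ENNReal.ofReal (f x) ∂ν ≠ ∞)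
    (hf : ∀ x, 0 ≤ f x) (hle : ∀ x, f x ≤ g x) {s : Set α} (hs : ν s ≠ 0)
    (hlt : ∀ x ∈ s, f x < g x) :
    ∫⁻ x, ENNReal.ofReal (f x) ∂ν < ∫⁻ x, ENNReal.ofReal (g x) ∂ν :=
  lintegral_strict_mono_of_ae_le_of_ae_lt_on hg.ennreal_ofReal hfi
    (ae_of_all _ fun x => ENNReal.ofReal_le_ofReal (hle x)) hs
    (ae_of_all _ fun x hx => (ENNReal.ofReal_lt_ofReal_iff'.2
      ⟨hlt x hx, (hf x).trans_lt (hlt x hx)⟩))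

section MedianLoss

variable {F w : ℝ → ℝ}

noncomputable def medianLoss (F w : ℝ → ℝ) (x : ℝ) : ℝ≥0∞ :=
  ∫⁻ y, ENNReal.ofReal (((Ioi x).indicator (fun _ => (1 : ℝ)) y - F y) ^ 2 / w y)

theorem aemeasurable_medianLoss_integrand (hFm : Measurable F) (hwm : AEMeasurable w) (x : ℝ) :
    AEMeasurable fun y => ((Ioi x).indicator (fun _ => (1 : ℝ)) y - F y) ^ 2 / w y :=
  (((measurable_const.indicator measurableSet_Ioi).sub hFm).pow_const 2).aemeasurable.div hwm

theorem medianLoss_lt_of_half_le (hF : StrictMono F) (hw : ∀ y, 0 < w y) (hwm : AEMeasurable w)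
    {a b : ℝ} (ha : 1 / 2 ≤ F a) (hab : a < b) (hfin : medianLoss F w a ≠ ∞) :
    medianLoss F w a < medianLoss F w b := by
  have hpos {y : ℝ} (hy : y ∈ Ioc a b) : 0 < 2 * F y - 1 := by linarith [hF hy.1]
  refine lintegral_ofReal_lt_of_le_of_lt_on
    (aemeasurable_medianLoss_integrand hF.monotone.measurable hwm b) hfin
    (fun y => div_nonneg (sq_nonneg _) (hw y).le) (fun y => ?_) (s := Ioc a b) (by simp [hab])
    (fun y hy => ?_)
  · refine div_le_div_of_nonneg_right ?_ (hw y).le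
    have := indicator_apply_nonneg (s := Ioc a b) (f := fun _ => 2 * F y - 1) (a := y)
      fun hy => (hpos hy).le
    linarith [sq_indicator_Ioi_sub_sub_sq hab.le y (F y)]
  · refine div_lt_div_of_pos_right ?_ (hw y)
    have hsq := sq_indicator_Ioi_sub_sub_sq hab.le y (F y)
    rw [indicator_of_mem hy] at hsq
    linarith [hpos hy]

theorem medianLoss_lt_of_le_half (hF : StrictMono F) (hw : ∀ y, 0 < w y) (hwm : AEMeasurable w)
    {a b : ℝ} (hb : F b ≤ 1 / 2) (hab : a < b) (hfin : medianLoss F w b ≠ ∞) :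
    medianLoss F w b < medianLoss F w a := by
  have hneg {y : ℝ} (hy : y ∈ Ioc a b) : 2 * F y - 1 ≤ 0 := by linarith [hF.monotone hy.2]
  refine lintegral_ofReal_lt_of_le_of_lt_on
    (aemeasurable_medianLoss_integrand hF.monotone.measurable hwm a) hfin
    (fun y => div_nonneg (sq_nonneg _) (hw y).le) (fun y => ?_) (s := Ioo a b) (by simp [hab])
    (fun y hy => ?_)
  · refine div_le_div_of_nonneg_right ?_ (hw y).le
    have := indicator_apply_nonpos (s := Ioc a b) (f := fun _ => 2 * F y - 1) (a := y) hneg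
    linarith [sq_indicator_Ioi_sub_sub_sq hab.le y (F y)]
  · refine div_lt_div_of_pos_right ?_ (hw y)
    have hsq := sq_indicator_Ioi_sub_sub_sq hab.le y (F y)
    rw [indicator_of_mem (Ioo_subset_Ioc_self hy)] at hsq
    linarith [hF hy.2]

theorem medianLoss_strictAntiOn (hF : StrictMono F) (hw : ∀ y, 0 < w y) (hwm : AEMeasurable w)
    (hfin : ∀ x, medianLoss F w x ≠ ∞) {m : ℝ} (hm : F m = 1 / 2) :
    StrictAntiOn (medianLoss F w) (Iic m) := fun _ _ b hb hab =>
  medianLoss_lt_of_le_half hF hw hwm (hm ▸ hF.monotone hb) hab (hfin b)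

theorem medianLoss_strictMonoOn (hF : StrictMono F) (hw : ∀ y, 0 < w y) (hwm : AEMeasurable w)
    (hfin : ∀ x, medianLoss F w x ≠ ∞) {m : ℝ} (hm : F m = 1 / 2) :
    StrictMonoOn (medianLoss F w) (Ici m) := fun a ha _ _ hab =>
  medianLoss_lt_of_half_le hF hw hwm (hm ▸ hF.monotone ha) hab (hfin a)

end MedianLoss

theorem stmt_4_general
    (σ f₀ : ℝ → ℝ)
    (hσc : Continuous σ) (hσpos : ∀ x, 0 < σ x)
    (hf₀pos : ∀ x, 0 < f₀ x)
    (hf₀int : ∫ x, f₀ x = 1)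
    (F₀ : ℝ → ℝ) (hF₀ : ∀ x, F₀ x = ∫ y in Iic x, f₀ y)
    (μ : ℝ) (hμ : F₀ μ = 1 / 2)
    (Φ : ℝ → ℝ≥0∞)
    (hΦ : ∀ x, Φ x = ∫⁻ y, ENNReal.ofReal
        (((Ioi x).indicator (fun _ => (1 : ℝ)) y - F₀ y) ^ 2 / (σ y ^ 2 * f₀ y)))
    (hΦfin : ∀ x, Φ x < ⊤) :
    StrictAntiOn Φ (Iic μ) ∧ StrictMonoOn Φ (Ici μ) := by
  have hf₀i : Integrable f₀ := .of_integral_ne_zero (by simp [hf₀int])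
  have hF₀mono : StrictMono F₀ := by
    simpa only [← funext hF₀] using strictMono_integral_Iic hf₀i hf₀pos
  have hΦeq : Φ = medianLoss F₀ fun y => σ y ^ 2 * f₀ y := funext hΦ
  have hw (y : ℝ) : 0 < σ y ^ 2 * f₀ y := mul_pos (pow_pos (hσpos y) 2) (hf₀pos y)
  have hwm : AEMeasurable fun y => σ y ^ 2 * f₀ y :=
    (hσc.measurable.pow_const 2).aemeasurable.mul hf₀i.aemeasurable
  have hfin (x : ℝ) : Φ x ≠ ⊤ := (hΦfin x).ne
  rw [hΦeq] at hfin ⊢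
  exact ⟨medianLoss_strictAntiOn hF₀mono hw hwm hfin hμ,
    medianLoss_strictMonoOn hF₀mono hw hwm hfin hμ⟩

theorem stmt_4
    (σ f₀ : ℝ → ℝ)
    (hσc : Continuous σ) (hσpos : ∀ x, 0 < σ x)
    (hf₀c : Continuous f₀) (hf₀pos : ∀ x, 0 < f₀ x)
    (hf₀int : ∫ x, f₀ x = 1)
    (F₀ : ℝ → ℝ) (hF₀ : ∀ x, F₀ x = ∫ y in Iic x, f₀ y)
    (μ : ℝ) (hμ : F₀ μ = 1 / 2)
    (Φ : ℝ → ℝ≥0∞)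
    (hΦ : ∀ x, Φ x = ∫⁻ y, ENNReal.ofReal
        (((Ioi x).indicator (fun _ => (1 : ℝ)) y - F₀ y) ^ 2 / (σ y ^ 2 * f₀ y)))
    (hΦfin : ∀ x, Φ x < ⊤) :
    StrictAntiOn Φ (Iic μ) ∧ StrictMonoOn Φ (Ici μ) :=
  stmt_4_general σ f₀ hσc hσpos hf₀pos hf₀int F₀ hF₀ μ hμ Φ hΦ hΦfin
end

section
/- Define Ψ(x) = ∫_{−∞}^{x} F₀(y)²/(σ(y)² f₀(y)) dy + (F₀(x)/(F₀(x) − 1))² · ∫_{x}^{∞} (F₀(y) − 1)²/(σ(y)² f₀(y)) dy. If Φ(x) < ∞ for all x ∈ ℝ (so that all the integrals appearing in Ψ are finite), then Ψ is differentiable at every x with Ψ′(x) = 2 F₀(x) f₀(x) (1 − F₀(x))^{−3} · ∫_{x}^{∞} (1 − F₀(y))²/(σ(y)² f₀(y)) dy; in particular Ψ′(x) > 0 for every x, so Ψ is strictly increasing on ℝ. -/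
/-!
Write `A x = ∫_{-∞}^x F₀² / (σ² f₀)` and `B x = ∫_x^∞ (1 - F₀)² / (σ² f₀)`; both are pieces
of `Φ x < ∞`, so `Ψ = A + (F₀ / (F₀ - 1))² B` with `A' = F₀² / (σ² f₀)` and
`B' = -(1 - F₀)² / (σ² f₀)`.
In the product rule, `A'` cancels exactly against `(F₀ / (F₀ - 1))² B'`, so `Ψ'` is the derivative
`2 F₀ f₀ / (1 - F₀)³` of the factor times `B > 0`.
-/

open MeasureTheory Set Filter Topology ENNReal

theorem integrableOn_of_eqOn_of_lintegral_ofReal_lt_top {α : Type*} [MeasurableSpace α]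
    {μ : Measure α} {g G : α → ℝ} {s : Set α} (hs : MeasurableSet s)
    (hg : AEStronglyMeasurable g (μ.restrict s)) (hg₀ : ∀ y ∈ s, 0 ≤ g y) (hgG : EqOn g G s)
    (hG : ∫⁻ y, ENNReal.ofReal (G y) ∂μ < ∞) : IntegrableOn g s μ := by
  refine (lintegral_ofReal_ne_top_iff_integrable hg (ae_restrict_of_forall_mem hs hg₀)).1
    (ne_of_lt ?_)
  calc ∫⁻ y in s, ENNReal.ofReal (g y) ∂μ
      = ∫⁻ y in s, ENNReal.ofReal (G y) ∂μ := setLIntegral_congr_fun hs fun y hy => by rw [hgG hy]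
    _ ≤ ∫⁻ y, ENNReal.ofReal (G y) ∂μ := setLIntegral_le_lintegral _ _
    _ < ∞ := hG

theorem setIntegral_pos_of_pos {α : Type*} [MeasurableSpace α] {μ : Measure α} {f : α → ℝ}
    {s : Set α} (hs : 0 < μ s) (hf : ∀ y, 0 < f y) (hint : IntegrableOn f s μ) :
    0 < ∫ y in s, f y ∂μ := by
  rw [setIntegral_pos_iff_support_of_nonneg_ae (ae_of_all _ fun y => (hf y).le) hint,
    Function.support_eq_univ fun y => (hf y).ne', univ_inter]
  exact hs

theorem hasDerivAt_integral_Iic {f : ℝ → ℝ} (hf : Continuous f)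
    (hint : ∀ a, IntegrableOn f (Iic a)) (x : ℝ) :
    HasDerivAt (fun u => ∫ y in Iic u, f y) (f x) x := by
  have hsplit : (fun u => ∫ y in Iic u, f y) = fun u => (∫ y in Iic x, f y) + ∫ y in x..u, f y :=
    funext fun u => by rw [← intervalIntegral.integral_Iic_sub_Iic (hint x) (hint u)]; ring
  rw [hsplit]
  exact (hf.integral_hasStrictDerivAt x x).hasDerivAt.const_add _

theorem hasDerivAt_integral_Ioi {f : ℝ → ℝ} (hf : Continuous f)
    (hint : ∀ a, IntegrableOn f (Ioi a)) (x : ℝ) :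
    HasDerivAt (fun u => ∫ y in Ioi u, f y) (-f x) x := by
  have hsplit : (fun u => ∫ y in Ioi u, f y) = fun u => (∫ y in Ioi x, f y) - ∫ y in x..u, f y :=
    funext fun u => by rw [← intervalIntegral.integral_Ioi_sub_Ioi' (hint x) (hint u)]; ring
  rw [hsplit]
  exact (hf.integral_hasStrictDerivAt x x).hasDerivAt.const_sub _

section Weighted

variable {F w : ℝ → ℝ}

theorem integrableOn_Iic_sq_div_of_lintegral_lt_top (hF : Measurable F) (hw : Measurable w)
    (hw₀ : ∀ y, 0 ≤ w y) {x : ℝ}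
    (hfin : ∫⁻ y, ENNReal.ofReal (((Ioi x).indicator (fun _ => (1 : ℝ)) y - F y) ^ 2 / w y) < ⊤) :
    IntegrableOn (fun y => F y ^ 2 / w y) (Iic x) :=
  integrableOn_of_eqOn_of_lintegral_ofReal_lt_top measurableSet_Iic
    ((hF.pow_const 2).div hw).aestronglyMeasurable (fun y _ => div_nonneg (sq_nonneg _) (hw₀ y))
    (fun y hy => by simp [indicator_of_notMem (notMem_Ioi.2 (mem_Iic.1 hy))]) hfin

theorem integrableOn_Ioi_sq_div_of_lintegral_lt_top (hF : Measurable F) (hw : Measurable w)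
    (hw₀ : ∀ y, 0 ≤ w y) {x : ℝ}
    (hfin : ∫⁻ y, ENNReal.ofReal (((Ioi x).indicator (fun _ => (1 : ℝ)) y - F y) ^ 2 / w y) < ⊤) :
    IntegrableOn (fun y => (1 - F y) ^ 2 / w y) (Ioi x) :=
  integrableOn_of_eqOn_of_lintegral_ofReal_lt_top measurableSet_Ioi
    (((measurable_const.sub hF).pow_const 2).div hw).aestronglyMeasurable
    (fun y _ => div_nonneg (sq_nonneg _) (hw₀ y))
    (fun y hy => by simp [indicator_of_mem hy]) hfin

theorem hasDerivAt_add_sq_div_sub_one_mul {A B : ℝ → ℝ} {f : ℝ → ℝ} {x : ℝ}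
    (hF : HasDerivAt F (f x) x) (hF₁ : F x ≠ 1) (hA : HasDerivAt A (F x ^ 2 / w x) x)
    (hB : HasDerivAt B (-((1 - F x) ^ 2 / w x)) x) :
    HasDerivAt (fun u => A u + (F u / (F u - 1)) ^ 2 * B u)
      (2 * F x * f x * ((1 - F x) ^ 3)⁻¹ * B x) x := by
  have hF₁' : F x - 1 ≠ 0 := sub_ne_zero.2 hF₁
  have hq : HasDerivAt (fun u => F u / (F u - 1)) _ x := hF.div (hF.sub_const 1) hF₁'
  refine (hA.add ((hq.fun_pow 2).mul hB)).congr_deriv ?_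
  have hcancel : (F x / (F x - 1)) ^ 2 * ((1 - F x) ^ 2 / w x) = F x ^ 2 / w x := by
    rw [sub_sq_comm 1 (F x), div_pow, div_mul_div_comm, mul_comm (F x ^ 2),
      mul_div_mul_left _ _ (pow_ne_zero 2 hF₁')]
  have hcube : (1 - F x) ^ 3 = -(F x - 1) ^ 3 := by ring
  rw [mul_neg, hcancel, add_comm, add_assoc, neg_add_cancel, add_zero, hcube, Nat.cast_ofNat,
    pow_one]
  field_simp
  ring

end Weighted

theorem stmt_5_general
    (σ f₀ : ℝ → ℝ)
    (hσc : Continuous σ) (hσpos : ∀ x, 0 < σ x)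
    (hf₀c : Continuous f₀) (hf₀pos : ∀ x, 0 < f₀ x)
    (F₀ : ℝ → ℝ) (hF₀ : ∀ x, F₀ x = ∫ y in Iic x, f₀ y)
    (hF₀bdd : ∀ x, 0 < F₀ x ∧ F₀ x < 1)
    (Φ : ℝ → ℝ≥0∞)
    (hΦ : ∀ x, Φ x = ∫⁻ y, ENNReal.ofReal
        (((Ioi x).indicator (fun _ => (1 : ℝ)) y - F₀ y) ^ 2 / (σ y ^ 2 * f₀ y)))
    (hΦfin : ∀ x, Φ x < ⊤)
    (Ψ : ℝ → ℝ)
    (hΨ : ∀ x, Ψ x =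
      (∫ y in Iic x, F₀ y ^ 2 / (σ y ^ 2 * f₀ y)) +
        (F₀ x / (F₀ x - 1)) ^ 2 * ∫ y in Ioi x, (F₀ y - 1) ^ 2 / (σ y ^ 2 * f₀ y)) :
    (∀ x, HasDerivAt Ψ
        (2 * F₀ x * f₀ x * ((1 - F₀ x) ^ 3)⁻¹ *
          ∫ y in Ioi x, (1 - F₀ y) ^ 2 / (σ y ^ 2 * f₀ y)) x) ∧
      (∀ x, 0 < 2 * F₀ x * f₀ x * ((1 - F₀ x) ^ 3)⁻¹ *
          ∫ y in Ioi x, (1 - F₀ y) ^ 2 / (σ y ^ 2 * f₀ y)) ∧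
      StrictMono Ψ := by
  have hw : ∀ y, 0 < σ y ^ 2 * f₀ y := fun y => mul_pos (pow_pos (hσpos y) 2) (hf₀pos y)
  have hwc : Continuous fun y => σ y ^ 2 * f₀ y := by fun_prop
  have hF₀' : ∀ x, HasDerivAt F₀ (f₀ x) x := by
    rw [funext hF₀]
    -- a non-integrable function has Bochner integral `0`, which `0 < F₀ a` rules out
    exact hasDerivAt_integral_Iic hf₀c fun a =>
      .of_integral_ne_zero ((hF₀ a) ▸ (hF₀bdd a).1.ne')
  have hF₀c : Continuous F₀ := continuous_iff_continuousAt.2 fun x => (hF₀' x).continuousAt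
  have hL := hasDerivAt_integral_Iic (f := fun y => F₀ y ^ 2 / (σ y ^ 2 * f₀ y))
    ((hF₀c.pow 2).div hwc fun y => (hw y).ne') fun x =>
    integrableOn_Iic_sq_div_of_lintegral_lt_top hF₀c.measurable hwc.measurable
      (fun y => (hw y).le) (hΦ x ▸ hΦfin x)
  have hRint : ∀ x, IntegrableOn (fun y => (1 - F₀ y) ^ 2 / (σ y ^ 2 * f₀ y)) (Ioi x) := fun x =>
    integrableOn_Ioi_sq_div_of_lintegral_lt_top hF₀c.measurable hwc.measurable
      (fun y => (hw y).le) (hΦ x ▸ hΦfin x)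
  have hR := hasDerivAt_integral_Ioi (f := fun y => (1 - F₀ y) ^ 2 / (σ y ^ 2 * f₀ y))
    (((continuous_const.sub hF₀c).pow 2).div hwc fun y => (hw y).ne') hRint
  have hderiv : ∀ x, HasDerivAt Ψ (2 * F₀ x * f₀ x * ((1 - F₀ x) ^ 3)⁻¹ *
      ∫ y in Ioi x, (1 - F₀ y) ^ 2 / (σ y ^ 2 * f₀ y)) x := by
    have hsq : ∀ y, (F₀ y - 1) ^ 2 = (1 - F₀ y) ^ 2 := fun y => sub_sq_comm _ _
    simp only [hsq] at hΨ
    rw [funext hΨ]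
    exact fun x => hasDerivAt_add_sq_div_sub_one_mul (w := fun y => σ y ^ 2 * f₀ y)
      (hF₀' x) (hF₀bdd x).2.ne (hL x) (hR x)
  have hpos : ∀ x, 0 < 2 * F₀ x * f₀ x * ((1 - F₀ x) ^ 3)⁻¹ *
      ∫ y in Ioi x, (1 - F₀ y) ^ 2 / (σ y ^ 2 * f₀ y) := fun x => by
    have hB := setIntegral_pos_of_pos (by simp) (fun y => div_pos
      (pow_pos (sub_pos.2 (hF₀bdd y).2) 2) (hw y)) (hRint x)
    have hF₀x := (hF₀bdd x).1
    have h1F₀x := sub_pos.2 (hF₀bdd x).2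
    have hf₀x := hf₀pos x
    positivity
  exact ⟨hderiv, hpos, strictMono_of_hasDerivAt_pos hderiv hpos⟩

theorem stmt_5
    (σ f₀ : ℝ → ℝ)
    (hσc : Continuous σ) (hσpos : ∀ x, 0 < σ x)
    (hf₀c : Continuous f₀) (hf₀pos : ∀ x, 0 < f₀ x)
    (hf₀int : ∫ x, f₀ x = 1)
    (F₀ : ℝ → ℝ) (hF₀ : ∀ x, F₀ x = ∫ y in Iic x, f₀ y)
    (hF₀bdd : ∀ x, 0 < F₀ x ∧ F₀ x < 1)
    (Φ : ℝ → ℝ≥0∞)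
    (hΦ : ∀ x, Φ x = ∫⁻ y, ENNReal.ofReal
        (((Ioi x).indicator (fun _ => (1 : ℝ)) y - F₀ y) ^ 2 / (σ y ^ 2 * f₀ y)))
    (hΦfin : ∀ x, Φ x < ⊤)
    (Ψ : ℝ → ℝ)
    (hΨ : ∀ x, Ψ x =
      (∫ y in Iic x, F₀ y ^ 2 / (σ y ^ 2 * f₀ y)) +
        (F₀ x / (F₀ x - 1)) ^ 2 * ∫ y in Ioi x, (F₀ y - 1) ^ 2 / (σ y ^ 2 * f₀ y)) :
    (∀ x, HasDerivAt Ψ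
        (2 * F₀ x * f₀ x * ((1 - F₀ x) ^ 3)⁻¹ *
          ∫ y in Ioi x, (1 - F₀ y) ^ 2 / (σ y ^ 2 * f₀ y)) x) ∧
      (∀ x, 0 < 2 * F₀ x * f₀ x * ((1 - F₀ x) ^ 3)⁻¹ *
          ∫ y in Ioi x, (1 - F₀ y) ^ 2 / (σ y ^ 2 * f₀ y)) ∧
      StrictMono Ψ :=
  stmt_5_general σ f₀ hσc hσpos hf₀c hf₀pos F₀ hF₀ hF₀bdd Φ hΦ hΦfin Ψ hΨ
end

section
/- If in addition σ is bounded, i.e. there is C > 0 with σ(y)² ≤ C for all y ∈ ℝ, then Φ(x) → ∞ as x → ∞ and Φ(x) → ∞ as x → −∞. -/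
/-!
Write `c = F₀ 0`, so `0 < c < 1`. For `y ∈ (0, x]` the integrand of `Φ x` is
`F₀ y² / (σ y² f₀ y) ≥ c² / (C f₀ y)`, and for `y ∈ (x, 0]` it is
`(1 - F₀ y)² / (σ y² f₀ y) ≥ (1 - c)² / (C f₀ y)`.
Since `1 / t ≥ 2 - t` for `t > 0`, the integral of `1 / f₀` over an interval of length `L`
is at least `2 L - ∫ f₀ = 2 L - 1`, so both tails of `Φ` grow at least linearly.
-/

open MeasureTheory Set Filter Topology ENNReal

lemma ofReal_integral_le_lintegral_ofReal {α : Type*} [MeasurableSpace α] {μ : Measure α}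
    (f : α → ℝ) : ENNReal.ofReal (∫ x, f x ∂μ) ≤ ∫⁻ x, ENNReal.ofReal (f x) ∂μ := by
  by_cases hf : Integrable f μ
  · refine ENNReal.ofReal_le_of_le_toReal ?_
    rw [integral_eq_lintegral_pos_part_sub_lintegral_neg_part hf]
    exact sub_le_self _ ENNReal.toReal_nonneg
  · simp [integral_undef hf]

lemma two_sub_le_inv {t : ℝ} (ht : 0 < t) : 2 - t ≤ t⁻¹ := by
  rw [← one_div, le_div_iff₀ ht]
  nlinarith [sq_nonneg (t - 1)]

lemma ofReal_two_mul_sub_integral_le_setLIntegral_inv {f : ℝ → ℝ} (hf : Integrable f)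
    (hpos : ∀ y, 0 < f y) {a b : ℝ} (hab : a ≤ b) :
    ENNReal.ofReal (2 * (b - a) - ∫ y, f y) ≤ ∫⁻ y in Ioc a b, ENNReal.ofReal (f y)⁻¹ := by
  have hconst : IntegrableOn (fun _ ↦ (2 : ℝ)) (Ioc a b) := integrableOn_const measure_Ioc_lt_top.ne
  calc ENNReal.ofReal (2 * (b - a) - ∫ y, f y)
      ≤ ENNReal.ofReal (2 * (b - a) - ∫ y in Ioc a b, f y) :=
        ENNReal.ofReal_le_ofReal <| sub_le_sub_left
          (setIntegral_le_integral hf (ae_of_all _ fun y ↦ (hpos y).le)) _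
    _ = ENNReal.ofReal (∫ y in Ioc a b, (2 - f y)) := by
        rw [integral_sub hconst hf.integrableOn, setIntegral_const, Real.volume_real_Ioc_of_le hab,
          smul_eq_mul, mul_comm]
    _ ≤ ∫⁻ y in Ioc a b, ENNReal.ofReal (2 - f y) := ofReal_integral_le_lintegral_ofReal _
    _ ≤ ∫⁻ y in Ioc a b, ENNReal.ofReal (f y)⁻¹ :=
        setLIntegral_mono' measurableSet_Ioc fun y _ ↦
          ENNReal.ofReal_le_ofReal (two_sub_le_inv (hpos y))

lemma tendsto_setLIntegral_inv_Ioc_atTop {f : ℝ → ℝ} (hf : Integrable f) (hpos : ∀ y, 0 < f y)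
    (a : ℝ) : Tendsto (fun x ↦ ∫⁻ y in Ioc a x, ENNReal.ofReal (f y)⁻¹) atTop (𝓝 ∞) := by
  refine tendsto_nhds_top_mono (ENNReal.tendsto_ofReal_atTop.comp ?_)
    ((eventually_ge_atTop a).mono fun x hx ↦
      ofReal_two_mul_sub_integral_le_setLIntegral_inv hf hpos hx)
  exact tendsto_atTop_atTop.2 fun r ↦ ⟨a + (r + ∫ y, f y) / 2, fun x hx ↦ by linarith⟩

lemma tendsto_setLIntegral_inv_Ioc_atBot {f : ℝ → ℝ} (hf : Integrable f) (hpos : ∀ y, 0 < f y)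
    (b : ℝ) : Tendsto (fun x ↦ ∫⁻ y in Ioc x b, ENNReal.ofReal (f y)⁻¹) atBot (𝓝 ∞) := by
  refine tendsto_nhds_top_mono (ENNReal.tendsto_ofReal_atTop.comp ?_)
    ((eventually_le_atBot b).mono fun x hx ↦
      ofReal_two_mul_sub_integral_le_setLIntegral_inv hf hpos hx)
  exact tendsto_atBot_atTop.2 fun r ↦ ⟨b - (r + ∫ y, f y) / 2, fun x hx ↦ by linarith⟩

lemma tendsto_lintegral_ofReal_top_of_const_mul_le {ι α : Type*} [MeasurableSpace α]
    {μ : Measure α} {l : Filter ι} {s : ι → Set α} (hs : ∀ i, MeasurableSet (s i))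
    {h : α → ℝ} {g : ι → α → ℝ} {k : ℝ} (hk : 0 < k)
    (hh : Tendsto (fun i ↦ ∫⁻ y in s i, ENNReal.ofReal (h y) ∂μ) l (𝓝 ∞))
    (hhg : ∀ i, ∀ y ∈ s i, k * h y ≤ g i y) :
    Tendsto (fun i ↦ ∫⁻ y, ENNReal.ofReal (g i y) ∂μ) l (𝓝 ∞) := by
  have hk' := ENNReal.ofReal_pos.2 hk
  have hlim := ENNReal.Tendsto.const_mul (a := ENNReal.ofReal k) hh (Or.inl top_ne_zero)
  rw [mul_top hk'.ne'] at hlim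
  refine tendsto_nhds_top_mono hlim (Eventually.of_forall fun i ↦ ?_)
  calc ENNReal.ofReal k * ∫⁻ y in s i, ENNReal.ofReal (h y) ∂μ
      = ∫⁻ y in s i, ENNReal.ofReal (k * h y) ∂μ := by
        rw [← lintegral_const_mul' _ _ ofReal_ne_top]
        simp only [ENNReal.ofReal_mul hk.le]
    _ ≤ ∫⁻ y in s i, ENNReal.ofReal (g i y) ∂μ :=
        setLIntegral_mono' (hs i) fun y hy ↦ ENNReal.ofReal_le_ofReal (hhg i y hy)
    _ ≤ ∫⁻ y, ENNReal.ofReal (g i y) ∂μ := setLIntegral_le_lintegral _ _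

lemma setIntegral_pos_of_forall_pos {α : Type*} [MeasurableSpace α] {μ : Measure α} {s : Set α}
    {f : α → ℝ} (hf : IntegrableOn f s μ) (hpos : ∀ y, 0 < f y) (hs : 0 < μ s) :
    0 < ∫ y in s, f y ∂μ := by
  have hsupp : Function.support f = univ := eq_univ_of_forall fun y ↦ (hpos y).ne'
  rwa [setIntegral_pos_iff_support_of_nonneg_ae (ae_of_all _ fun y ↦ (hpos y).le) hf, hsupp,
    univ_inter]

lemma div_mul_inv_le_div_mul {c u s C t : ℝ} (hc : 0 ≤ c) (hcu : c ≤ u) (hs : 0 < s)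
    (hsC : s ≤ C) (ht : 0 < t) : c / C * t⁻¹ ≤ u / (s * t) := by
  calc c / C * t⁻¹ = c / (C * t) := by rw [← div_eq_mul_inv, div_div]
    _ ≤ u / (s * t) := div_le_div₀ (hc.trans hcu) hcu (by positivity) (by gcongr)

theorem stmt_6_general
    (σ f₀ : ℝ → ℝ)
    (hσpos : ∀ x, 0 < σ x)
    (hf₀pos : ∀ x, 0 < f₀ x)
    (hf₀int : ∫ x, f₀ x = 1)
    (F₀ : ℝ → ℝ) (hF₀ : ∀ x, F₀ x = ∫ y in Iic x, f₀ y)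
    (Φ : ℝ → ℝ≥0∞)
    (hΦ : ∀ x, Φ x = ∫⁻ y, ENNReal.ofReal
        (((Ioi x).indicator (fun _ => (1 : ℝ)) y - F₀ y) ^ 2 / (σ y ^ 2 * f₀ y)))
    (C : ℝ) (hC : 0 < C) (hσbdd : ∀ y, σ y ^ 2 ≤ C) :
    Tendsto Φ atTop (𝓝 ⊤) ∧ Tendsto Φ atBot (𝓝 ⊤) := by
  have hint : Integrable f₀ := integrable_of_integral_eq_one hf₀int
  have hmono : Monotone F₀ := fun u v huv ↦ by
    rw [hF₀ u, hF₀ v]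
    exact setIntegral_mono_set hint.integrableOn (ae_of_all _ fun y ↦ (hf₀pos y).le)
      (Iic_subset_Iic.2 huv).eventuallyLE
  have hF₀pos : 0 < F₀ 0 := by
    rw [hF₀]
    exact setIntegral_pos_of_forall_pos hint.integrableOn hf₀pos (by simp)
  have hF₀lt : F₀ 0 < 1 := by
    have := setIntegral_pos_of_forall_pos (s := Ioi 0) hint.integrableOn hf₀pos (by simp)
    rw [hF₀, ← hf₀int, ← integral_add_compl measurableSet_Iic hint, compl_Iic]
    linarith
  have hbound {c u : ℝ} (hc : 0 ≤ c) (hcu : c ≤ u) (y : ℝ) :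
      c ^ 2 / C * (f₀ y)⁻¹ ≤ u ^ 2 / (σ y ^ 2 * f₀ y) :=
    div_mul_inv_le_div_mul (by positivity) (pow_le_pow_left₀ hc hcu 2) (pow_pos (hσpos y) 2)
      (hσbdd y) (hf₀pos y)
  rw [funext hΦ]
  constructor
  · refine tendsto_lintegral_ofReal_top_of_const_mul_le (k := F₀ 0 ^ 2 / C)
      (fun _ ↦ measurableSet_Ioc) (by positivity)
      (tendsto_setLIntegral_inv_Ioc_atTop hint hf₀pos 0) fun x y hy ↦ ?_
    rw [indicator_of_notMem (notMem_Ioi.2 hy.2), zero_sub, neg_sq]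
    exact hbound hF₀pos.le (hmono hy.1.le) y
  · refine tendsto_lintegral_ofReal_top_of_const_mul_le (k := (1 - F₀ 0) ^ 2 / C)
      (fun _ ↦ measurableSet_Ioc) (div_pos (pow_pos (sub_pos.2 hF₀lt) 2) hC)
      (tendsto_setLIntegral_inv_Ioc_atBot hint hf₀pos 0) fun x y hy ↦ ?_
    rw [indicator_of_mem (mem_Ioi.2 hy.1)]
    exact hbound (sub_nonneg.2 hF₀lt.le) (sub_le_sub_left (hmono hy.2) 1) y

theorem stmt_6
    (σ f₀ : ℝ → ℝ)
    (hσc : Continuous σ) (hσpos : ∀ x, 0 < σ x)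
    (hf₀c : Continuous f₀) (hf₀pos : ∀ x, 0 < f₀ x)
    (hf₀int : ∫ x, f₀ x = 1)
    (F₀ : ℝ → ℝ) (hF₀ : ∀ x, F₀ x = ∫ y in Iic x, f₀ y)
    (Φ : ℝ → ℝ≥0∞)
    (hΦ : ∀ x, Φ x = ∫⁻ y, ENNReal.ofReal
        (((Ioi x).indicator (fun _ => (1 : ℝ)) y - F₀ y) ^ 2 / (σ y ^ 2 * f₀ y)))
    (C : ℝ) (hC : 0 < C) (hσbdd : ∀ y, σ y ^ 2 ≤ C) :
    Tendsto Φ atTop (𝓝 ⊤) ∧ Tendsto Φ atBot (𝓝 ⊤) :=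
  stmt_6_general σ f₀ hσpos hf₀pos hf₀int F₀ hF₀ Φ hΦ C hC hσbdd
end

section
/- If Φ(x₀) < ∞ for some x₀ ∈ ℝ, then Φ(x) < ∞ for every x ∈ ℝ. -/
open MeasureTheory Set Filter Topology ENNReal

theorem stmt_7
    (σ f₀ : ℝ → ℝ)
    (hσc : Continuous σ) (hσpos : ∀ x, 0 < σ x)
    (hf₀c : Continuous f₀) (hf₀pos : ∀ x, 0 < f₀ x)
    (hf₀int : ∫ x, f₀ x = 1)
    (F₀ : ℝ → ℝ) (hF₀ : ∀ x, F₀ x = ∫ y in Iic x, f₀ y)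
    (Φ : ℝ → ℝ≥0∞)
    (hΦ : ∀ x, Φ x = ∫⁻ y, ENNReal.ofReal
        (((Ioi x).indicator (fun _ => (1 : ℝ)) y - F₀ y) ^ 2 / (σ y ^ 2 * f₀ y)))
    (x₀ : ℝ) (hx₀ : Φ x₀ < ⊤) :
    ∀ x, Φ x < ⊤ := by
  intro x
  have hf₀I : Integrable f₀ := by
    by_contra h
    rw [integral_undef h] at hf₀int
    norm_num at hf₀int
  have hF₀0 : ∀ y, 0 ≤ F₀ y := fun y => by
    rw [hF₀]
    exact setIntegral_nonneg measurableSet_Iic (fun z _ => (hf₀pos z).le)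
  have hF₀1 : ∀ y, F₀ y ≤ 1 := fun y => by
    rw [hF₀, ← hf₀int]
    exact setIntegral_le_integral hf₀I (ae_of_all _ fun z => (hf₀pos z).le)
  set I := Icc (min x x₀) (max x x₀) with hI
  have hden : ∀ y, 0 < σ y ^ 2 * f₀ y := fun y => by
    have := hσpos y; have := hf₀pos y; positivity
  have hcont : ContinuousOn (fun y => 1 / (σ y ^ 2 * f₀ y)) I :=
    (continuous_const.div ((hσc.pow 2).mul hf₀c) (fun y => (hden y).ne')).continuousOn
  obtain ⟨C, hC⟩ := isCompact_Icc.exists_bound_of_continuousOn hcont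
  -- pointwise bound
  have key : ∀ y, ENNReal.ofReal
      (((Ioi x).indicator (fun _ => (1 : ℝ)) y - F₀ y) ^ 2 / (σ y ^ 2 * f₀ y))
      ≤ I.indicator (fun _ => ENNReal.ofReal C) y + ENNReal.ofReal
      (((Ioi x₀).indicator (fun _ => (1 : ℝ)) y - F₀ y) ^ 2 / (σ y ^ 2 * f₀ y)) := by
    intro y
    by_cases hy : y ∈ I
    · have hnum : ((Ioi x).indicator (fun _ => (1 : ℝ)) y - F₀ y) ^ 2 ≤ 1 := by
        have h0 := hF₀0 y; have h1 := hF₀1 y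
        by_cases hyx : y ∈ Ioi x
        · rw [indicator_of_mem hyx]; nlinarith
        · rw [indicator_of_notMem hyx]; nlinarith
      have hle : ((Ioi x).indicator (fun _ => (1 : ℝ)) y - F₀ y) ^ 2 / (σ y ^ 2 * f₀ y)
          ≤ C := by
        calc ((Ioi x).indicator (fun _ => (1 : ℝ)) y - F₀ y) ^ 2 / (σ y ^ 2 * f₀ y)
            ≤ 1 / (σ y ^ 2 * f₀ y) := by
              rw [div_le_div_iff₀ (hden y) (hden y)]
              nlinarith [hden y]
          _ ≤ ‖1 / (σ y ^ 2 * f₀ y)‖ := le_abs_self _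
          _ ≤ C := hC y hy
      rw [indicator_of_mem hy]
      exact le_add_right (ENNReal.ofReal_le_ofReal hle)
    · rw [indicator_of_notMem hy, zero_add]
      have : (Ioi x).indicator (fun _ => (1 : ℝ)) y
          = (Ioi x₀).indicator (fun _ => (1 : ℝ)) y := by
        rcases lt_or_ge y (min x x₀) with h | h
        · rw [indicator_of_notMem, indicator_of_notMem]
          · simp only [mem_Ioi, not_lt]; exact le_of_lt (lt_of_lt_of_le h (min_le_right _ _))
          · simp only [mem_Ioi, not_lt]; exact le_of_lt (lt_of_lt_of_le h (min_le_left _ _))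
        · have h2 : max x x₀ < y := by
            by_contra h2
            push_neg at h2
            exact hy ⟨h, h2⟩
          rw [indicator_of_mem, indicator_of_mem]
          · exact lt_of_le_of_lt (le_max_right _ _) h2
          · exact lt_of_le_of_lt (le_max_left _ _) h2
      rw [this]
  calc Φ x = ∫⁻ y, ENNReal.ofReal
        (((Ioi x).indicator (fun _ => (1 : ℝ)) y - F₀ y) ^ 2 / (σ y ^ 2 * f₀ y)) := hΦ x
    _ ≤ ∫⁻ y, (I.indicator (fun _ => ENNReal.ofReal C) y + ENNReal.ofReal
        (((Ioi x₀).indicator (fun _ => (1 : ℝ)) y - F₀ y) ^ 2 / (σ y ^ 2 * f₀ y))) :=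
      lintegral_mono key
    _ = (∫⁻ y, I.indicator (fun _ => ENNReal.ofReal C) y) + ∫⁻ y, ENNReal.ofReal
        (((Ioi x₀).indicator (fun _ => (1 : ℝ)) y - F₀ y) ^ 2 / (σ y ^ 2 * f₀ y)) :=
      lintegral_add_left (measurable_const.indicator measurableSet_Icc) _
    _ < ⊤ := by
      rw [← hΦ x₀]
      apply ENNReal.add_lt_top.mpr
      refine ⟨?_, hx₀⟩
      rw [lintegral_indicator measurableSet_Icc, lintegral_const,
        Measure.restrict_apply_univ]
      exact ENNReal.mul_lt_top ENNReal.ofReal_lt_top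
        (by rw [Real.volume_Icc]; exact ENNReal.ofReal_lt_top)
end

section
/- For every x, y ∈ ℝ one has the pointwise bound |F₀(y)·F₀(x) − F₀(min(y,x))| ≤ |𝟙{y > x} − F₀(y)|; consequently, for every x ∈ ℝ, ∫_ℝ (F₀(y)F₀(x) − F₀(min(y,x)))² / (σ(y)² f₀(y)) dy ≤ Φ(x). In particular, if Φ(x) < ∞ then the limiting variance d_F(x)² = 4 ∫_ℝ (F₀(y)F₀(x) − F₀(min(y,x)))² / (σ(y)² f₀(y)) dy satisfies d_F(x)² ≤ 4 Φ(x) < ∞. -/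
open MeasureTheory Set Filter Topology ENNReal

theorem stmt_8
    (σ f₀ : ℝ → ℝ)
    (hσc : Continuous σ) (hσpos : ∀ x, 0 < σ x)
    (hf₀c : Continuous f₀) (hf₀pos : ∀ x, 0 < f₀ x)
    (hf₀int : ∫ x, f₀ x = 1)
    (F₀ : ℝ → ℝ) (hF₀ : ∀ x, F₀ x = ∫ y in Iic x, f₀ y)
    (Φ : ℝ → ℝ≥0∞)
    (hΦ : ∀ x, Φ x = ∫⁻ y, ENNReal.ofReal
        (((Ioi x).indicator (fun _ => (1 : ℝ)) y - F₀ y) ^ 2 / (σ y ^ 2 * f₀ y))) :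
    (∀ x y, |F₀ y * F₀ x - F₀ (min y x)| ≤
        |(Ioi x).indicator (fun _ => (1 : ℝ)) y - F₀ y|) ∧
      (∀ x, (∫⁻ y, ENNReal.ofReal
          ((F₀ y * F₀ x - F₀ (min y x)) ^ 2 / (σ y ^ 2 * f₀ y))) ≤ Φ x) ∧
      (∀ x, Φ x < ⊤ →
        4 * (∫⁻ y, ENNReal.ofReal
            ((F₀ y * F₀ x - F₀ (min y x)) ^ 2 / (σ y ^ 2 * f₀ y))) ≤ 4 * Φ x ∧
        4 * (∫⁻ y, ENNReal.ofReal
            ((F₀ y * F₀ x - F₀ (min y x)) ^ 2 / (σ y ^ 2 * f₀ y))) < ⊤) := by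
  have hint : Integrable f₀ := by
    by_contra h
    rw [integral_undef h] at hf₀int
    norm_num at hf₀int
  have hF0 : ∀ x, 0 ≤ F₀ x := by
    intro x
    rw [hF₀]
    exact setIntegral_nonneg measurableSet_Iic (fun y _ => (hf₀pos y).le)
  have hF1 : ∀ x, F₀ x ≤ 1 := by
    intro x
    rw [hF₀, ← hf₀int]
    exact setIntegral_le_integral hint (Filter.Eventually.of_forall fun y => (hf₀pos y).le)
  have key : ∀ x y, |F₀ y * F₀ x - F₀ (min y x)| ≤
      |(Ioi x).indicator (fun _ => (1 : ℝ)) y - F₀ y| := by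
    intro x y
    by_cases h : y ∈ Ioi x
    · rw [indicator_of_mem h]
      have hmin : min y x = x := min_eq_right (le_of_lt h)
      rw [hmin]
      have h1 : F₀ y * F₀ x - F₀ x = F₀ x * (F₀ y - 1) := by ring
      rw [h1, abs_mul, abs_of_nonneg (hF0 x)]
      have h2 : |F₀ y - 1| = |1 - F₀ y| := abs_sub_comm _ _
      rw [h2]
      nlinarith [abs_nonneg (1 - F₀ y), hF1 x]
    · rw [indicator_of_notMem h]
      have hmin : min y x = y := min_eq_left (le_of_not_gt h)
      rw [hmin]
      have h1 : F₀ y * F₀ x - F₀ y = F₀ y * (F₀ x - 1) := by ring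
      rw [h1, abs_mul, abs_of_nonneg (hF0 y)]
      have h2 : |(0:ℝ) - F₀ y| = F₀ y := by
        rw [zero_sub, abs_neg, abs_of_nonneg (hF0 y)]
      rw [h2]
      have habs : |F₀ x - 1| ≤ 1 := abs_le.mpr ⟨by linarith [hF0 x], by linarith [hF1 x]⟩
      nlinarith [hF0 y, abs_nonneg (F₀ x - 1)]
  have key2 : ∀ x, (∫⁻ y, ENNReal.ofReal
      ((F₀ y * F₀ x - F₀ (min y x)) ^ 2 / (σ y ^ 2 * f₀ y))) ≤ Φ x := by
    intro x
    rw [hΦ]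
    apply lintegral_mono
    intro y
    apply ENNReal.ofReal_le_ofReal
    apply div_le_div_of_nonneg_right ?_ (mul_pos (pow_pos (hσpos y) 2) (hf₀pos y)).le
    rw [← sq_abs (F₀ y * F₀ x - F₀ (min y x)),
        ← sq_abs ((Ioi x).indicator (fun _ => (1 : ℝ)) y - F₀ y)]
    exact pow_le_pow_left₀ (abs_nonneg _) (key x y) 2
  refine ⟨key, key2, fun x hx => ?_⟩
  constructor
  · exact mul_le_mul_right (key2 x) 4
  · calc 4 * (∫⁻ y, ENNReal.ofReal
        ((F₀ y * F₀ x - F₀ (min y x)) ^ 2 / (σ y ^ 2 * f₀ y))) ≤ 4 * Φ x :=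
          mul_le_mul_right (key2 x) 4
    _ < ⊤ := ENNReal.mul_lt_top (by norm_num) hx
end

section
/- Let a > 0, b ∈ ℝ, σ > 0, let f₀(x) = (a/σ²) exp(−2a|x − b|/σ²) with distribution function F₀(x) = ∫_{−∞}^{x} f₀(y) dy, and define Φ(x) = ∫_ℝ (𝟙{y > x} − F₀(y))² / (σ² f₀(y)) dy. Then for every x ≥ b, writing U = 2a(x − b)/σ², one has Φ(x) = (σ²/(2a²)) · (e^{U} − U − 1/2). In particular Φ(x) = (σ²/(2a²)) e^{2a(x−b)/σ²}(1 + o(1)) as x → ∞. -/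
/-! With `c = 2a/σ²`, `f₀` is the Laplace density `(c/2) e^{-c|y-b|}`, whose distribution function
is `e^{c(y-b)}/2` left of `b` and `1 - e^{-c(y-b)}/2` right of it. For `x ≥ b` the integrand of
`Φ` is therefore a combination of `e^{±c(y-b)}` on each of `(-∞, b]`, `(b, x]` and `(x, ∞)`; the
three elementary integrals add up to `(2/(σ²c²)) (e^U - U - 1/2)` with `U = c(x-b)`, and the
asymptotics follow from `U e^{-U} → 0`. -/

open MeasureTheory Set Filter Topology ENNReal Real

section ExpIntegrals

variable {c : ℝ}

lemma integrableOn_exp_mul_sub_Iic (hc : 0 < c) (b B : ℝ) :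
    IntegrableOn (fun y => exp (c * (y - b))) (Iic B) := by
  simp_rw [mul_sub, exp_sub]
  exact (integrableOn_exp_mul_Iic hc B).div_const _

lemma integral_exp_mul_sub_Iic (hc : 0 < c) (b B : ℝ) :
    ∫ y in Iic B, exp (c * (y - b)) = exp (c * (B - b)) / c := by
  simp_rw [mul_sub, exp_sub, integral_div, integral_exp_mul_Iic hc]
  ring

lemma integrableOn_exp_neg_mul_sub_Ioi (hc : 0 < c) (b B : ℝ) :
    IntegrableOn (fun y => exp (-c * (y - b))) (Ioi B) := by
  simp_rw [mul_sub, exp_sub]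
  exact (integrableOn_exp_mul_Ioi (neg_neg_of_pos hc) B).div_const _

lemma integral_exp_neg_mul_sub_Ioi (hc : 0 < c) (b B : ℝ) :
    ∫ y in Ioi B, exp (-c * (y - b)) = exp (-c * (B - b)) / c := by
  simp_rw [mul_sub, exp_sub, integral_div, integral_exp_mul_Ioi (neg_neg_of_pos hc)]
  field_simp

end ExpIntegrals

section ThreeIntervals

variable {E : Type*} [NormedAddCommGroup E] {μ : Measure ℝ} {f : ℝ → E}
  {b x : ℝ}

lemma integrable_of_integrableOn_Iic_Ioc_Ioi (hbx : b ≤ x) (h₁ : IntegrableOn f (Iic b) μ)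
    (h₂ : IntegrableOn f (Ioc b x) μ) (h₃ : IntegrableOn f (Ioi x) μ) : Integrable f μ := by
  rw [← integrableOn_univ, ← Iic_union_Ioi (a := x), ← Iic_union_Ioc_eq_Iic hbx]
  exact (h₁.union h₂).union h₃

lemma integral_eq_Iic_add_Ioc_add_Ioi [NormedSpace ℝ E] (hbx : b ≤ x)
    (h₁ : IntegrableOn f (Iic b) μ) (h₂ : IntegrableOn f (Ioc b x) μ)
    (h₃ : IntegrableOn f (Ioi x) μ) :
    ∫ y, f y ∂μ = (∫ y in Iic b, f y ∂μ) + (∫ y in Ioc b x, f y ∂μ) + ∫ y in Ioi x, f y ∂μ := by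
  rw [← integral_add_compl measurableSet_Iic (integrable_of_integrableOn_Iic_Ioc_Ioi hbx h₁ h₂ h₃),
    compl_Iic, ← Iic_union_Ioc_eq_Iic hbx,
    setIntegral_union (Iic_disjoint_Ioc le_rfl) measurableSet_Ioc h₁ h₂]

end ThreeIntervals

noncomputable def laplacePDF (c b y : ℝ) : ℝ := c / 2 * exp (-(c * |y - b|))

noncomputable def laplaceCDF (c b y : ℝ) : ℝ := ∫ t in Iic y, laplacePDF c b t

section Laplace

variable {c b y : ℝ}

lemma laplacePDF_pos (hc : 0 < c) : 0 < laplacePDF c b y := by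
  unfold laplacePDF; positivity

lemma laplacePDF_of_le (hy : y ≤ b) : laplacePDF c b y = c / 2 * exp (c * (y - b)) := by
  rw [laplacePDF, abs_of_nonpos (sub_nonpos.2 hy)]; ring_nf

lemma laplacePDF_of_ge (hy : b ≤ y) : laplacePDF c b y = c / 2 * exp (-c * (y - b)) := by
  rw [laplacePDF, abs_of_nonneg (sub_nonneg.2 hy), neg_mul]

lemma integrableOn_laplacePDF_Iic (hc : 0 < c) : IntegrableOn (laplacePDF c b) (Iic b) :=
  IntegrableOn.congr_fun ((integrableOn_exp_mul_sub_Iic hc b b).const_mul (c / 2))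
    (fun _ ht => (laplacePDF_of_le ht).symm) measurableSet_Iic

lemma integrableOn_laplacePDF_Ioi (hc : 0 < c) : IntegrableOn (laplacePDF c b) (Ioi b) :=
  IntegrableOn.congr_fun ((integrableOn_exp_neg_mul_sub_Ioi hc b b).const_mul (c / 2))
    (fun _ ht => (laplacePDF_of_ge ht.le).symm) measurableSet_Ioi

lemma integral_laplacePDF_Iic_of_le (hc : 0 < c) (hy : y ≤ b) :
    ∫ t in Iic y, laplacePDF c b t = exp (c * (y - b)) / 2 := by
  rw [setIntegral_congr_fun measurableSet_Iic fun t ht => laplacePDF_of_le (le_trans ht hy),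
    integral_const_mul, integral_exp_mul_sub_Iic hc]
  field_simp

lemma integral_laplacePDF_Ioi_of_ge (hc : 0 < c) (hy : b ≤ y) :
    ∫ t in Ioi y, laplacePDF c b t = exp (-c * (y - b)) / 2 := by
  rw [setIntegral_congr_fun measurableSet_Ioi fun t ht => laplacePDF_of_ge (hy.trans ht.le),
    integral_const_mul, integral_exp_neg_mul_sub_Ioi hc]
  field_simp

lemma integrable_laplacePDF (hc : 0 < c) : Integrable (laplacePDF c b) := by
  rw [← integrableOn_univ, ← Iic_union_Ioi (a := b)]
  exact (integrableOn_laplacePDF_Iic hc).union (integrableOn_laplacePDF_Ioi hc)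

lemma integral_laplacePDF (hc : 0 < c) : ∫ t, laplacePDF c b t = 1 := by
  rw [← integral_add_compl measurableSet_Iic (integrable_laplacePDF hc), compl_Iic,
    integral_laplacePDF_Iic_of_le hc le_rfl, integral_laplacePDF_Ioi_of_ge hc le_rfl]
  norm_num

lemma laplaceCDF_of_le (hc : 0 < c) (hy : y ≤ b) : laplaceCDF c b y = exp (c * (y - b)) / 2 :=
  integral_laplacePDF_Iic_of_le hc hy

lemma laplaceCDF_of_ge (hc : 0 < c) (hy : b ≤ y) :
    laplaceCDF c b y = 1 - exp (-c * (y - b)) / 2 := by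
  rw [laplaceCDF, ← integral_laplacePDF_Ioi_of_ge hc hy, eq_sub_iff_add_eq, ← compl_Iic,
    integral_add_compl measurableSet_Iic (integrable_laplacePDF hc), integral_laplacePDF hc]

end Laplace

/-- `σ²` times the integrand of `Φ(x)` when `f₀ = laplacePDF c b`. -/
noncomputable def laplacePhiIntegrand (c b x y : ℝ) : ℝ :=
  ((Ioi x).indicator (fun _ => (1 : ℝ)) y - laplaceCDF c b y) ^ 2 / laplacePDF c b y

section PhiIntegrand

variable {c b x y : ℝ}

lemma laplacePhiIntegrand_nonneg (hc : 0 < c) : 0 ≤ laplacePhiIntegrand c b x y :=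
  div_nonneg (sq_nonneg _) (laplacePDF_pos hc).le

lemma laplacePhiIntegrand_of_le (hc : 0 < c) (hbx : b ≤ x) (hy : y ≤ b) :
    laplacePhiIntegrand c b x y = exp (c * (y - b)) / (2 * c) := by
  rw [laplacePhiIntegrand, indicator_of_notMem (notMem_Ioi.2 (hy.trans hbx)),
    laplaceCDF_of_le hc hy, laplacePDF_of_le hy]
  field_simp
  ring

lemma laplacePhiIntegrand_of_mem_Ioc (hc : 0 < c) (hy : y ∈ Ioc b x) :
    laplacePhiIntegrand c b x y = 2 / c * (exp (c * (y - b)) - 1 + exp (-c * (y - b)) / 4) := by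
  rw [laplacePhiIntegrand, indicator_of_notMem (notMem_Ioi.2 hy.2), laplaceCDF_of_ge hc hy.1.le,
    laplacePDF_of_ge hy.1.le, neg_mul, exp_neg]
  field_simp
  ring

lemma laplacePhiIntegrand_of_gt (hc : 0 < c) (hbx : b ≤ x) (hy : x < y) :
    laplacePhiIntegrand c b x y = exp (-c * (y - b)) / (2 * c) := by
  rw [laplacePhiIntegrand, indicator_of_mem (mem_Ioi.2 hy), laplaceCDF_of_ge hc (hbx.trans hy.le),
    laplacePDF_of_ge (hbx.trans hy.le)]
  field_simp
  ring

lemma integrableOn_laplacePhiIntegrand_Iic (hc : 0 < c) (hbx : b ≤ x) :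
    IntegrableOn (laplacePhiIntegrand c b x) (Iic b) :=
  IntegrableOn.congr_fun ((integrableOn_exp_mul_sub_Iic hc b b).div_const (2 * c))
    (fun _ hy => (laplacePhiIntegrand_of_le hc hbx hy).symm) measurableSet_Iic

lemma integrableOn_laplacePhiIntegrand_Ioc (hc : 0 < c) :
    IntegrableOn (laplacePhiIntegrand c b x) (Ioc b x) :=
  IntegrableOn.congr_fun (Continuous.integrableOn_Ioc (by fun_prop))
    (fun _ hy => (laplacePhiIntegrand_of_mem_Ioc hc hy).symm) measurableSet_Ioc

lemma integrableOn_laplacePhiIntegrand_Ioi (hc : 0 < c) (hbx : b ≤ x) :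
    IntegrableOn (laplacePhiIntegrand c b x) (Ioi x) :=
  IntegrableOn.congr_fun ((integrableOn_exp_neg_mul_sub_Ioi hc b x).div_const (2 * c))
    (fun _ hy => (laplacePhiIntegrand_of_gt hc hbx hy).symm) measurableSet_Ioi

lemma integral_laplacePhiIntegrand_Iic (hc : 0 < c) (hbx : b ≤ x) :
    ∫ y in Iic b, laplacePhiIntegrand c b x y = 1 / (2 * c ^ 2) := by
  rw [setIntegral_congr_fun measurableSet_Iic fun y hy => laplacePhiIntegrand_of_le hc hbx hy,
    integral_div, integral_exp_mul_sub_Iic hc, sub_self, mul_zero, exp_zero]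
  field_simp

lemma integral_laplacePhiIntegrand_Ioc (hc : 0 < c) (hbx : b ≤ x) :
    ∫ y in Ioc b x, laplacePhiIntegrand c b x y =
      2 / c ^ 2 * (exp (c * (x - b)) - c * (x - b) - exp (-c * (x - b)) / 4 - 3 / 4) := by
  have hderiv : ∀ y ∈ uIcc b x, HasDerivAt
      (fun y => 2 / c ^ 2 * (exp (c * (y - b)) - c * (y - b) - exp (-c * (y - b)) / 4))
      (2 / c * (exp (c * (y - b)) - 1 + exp (-c * (y - b)) / 4)) y := by
    intro y _
    have hu : HasDerivAt (fun y => c * (y - b)) c y := by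
      simpa using ((hasDerivAt_id y).sub_const b).const_mul c
    have hv : HasDerivAt (fun y => -c * (y - b)) (-c) y := by
      simpa using ((hasDerivAt_id y).sub_const b).const_mul (-c)
    refine (((hu.exp.sub hu).sub (hv.exp.div_const 4)).const_mul (2 / c ^ 2)).congr_deriv ?_
    field_simp
    ring
  rw [setIntegral_congr_fun measurableSet_Ioc fun y hy => laplacePhiIntegrand_of_mem_Ioc hc hy,
    ← intervalIntegral.integral_of_le hbx,
    intervalIntegral.integral_eq_sub_of_hasDerivAt hderiv
      (Continuous.intervalIntegrable (by fun_prop) b x)]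
  simp only [sub_self, mul_zero, exp_zero]
  ring

lemma integral_laplacePhiIntegrand_Ioi (hc : 0 < c) (hbx : b ≤ x) :
    ∫ y in Ioi x, laplacePhiIntegrand c b x y = exp (-c * (x - b)) / (2 * c ^ 2) := by
  rw [setIntegral_congr_fun measurableSet_Ioi fun y hy => laplacePhiIntegrand_of_gt hc hbx hy,
    integral_div, integral_exp_neg_mul_sub_Ioi hc]
  field_simp

lemma integrable_laplacePhiIntegrand (hc : 0 < c) (hbx : b ≤ x) :
    Integrable (laplacePhiIntegrand c b x) :=
  integrable_of_integrableOn_Iic_Ioc_Ioi hbx (integrableOn_laplacePhiIntegrand_Iic hc hbx)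
    (integrableOn_laplacePhiIntegrand_Ioc hc) (integrableOn_laplacePhiIntegrand_Ioi hc hbx)

lemma integral_laplacePhiIntegrand (hc : 0 < c) (hbx : b ≤ x) :
    ∫ y, laplacePhiIntegrand c b x y = 2 / c ^ 2 * (exp (c * (x - b)) - c * (x - b) - 1 / 2) := by
  rw [integral_eq_Iic_add_Ioc_add_Ioi hbx (integrableOn_laplacePhiIntegrand_Iic hc hbx)
    (integrableOn_laplacePhiIntegrand_Ioc hc) (integrableOn_laplacePhiIntegrand_Ioi hc hbx),
    integral_laplacePhiIntegrand_Iic hc hbx, integral_laplacePhiIntegrand_Ioc hc hbx,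
    integral_laplacePhiIntegrand_Ioi hc hbx]
  field_simp
  ring

end PhiIntegrand

lemma tendsto_exp_sub_self_sub_half_div_exp :
    Tendsto (fun U => (exp U - U - 1 / 2) / exp U) atTop (𝓝 1) := by
  have h : Tendsto (fun U => 1 - U * exp (-U) - exp (-U) / 2) atTop (𝓝 (1 - 0 - 0 / 2)) :=
    ((tendsto_const_nhds.sub (by simpa using tendsto_pow_mul_exp_neg_atTop_nhds_zero 1)).sub
      (tendsto_exp_neg_atTop_nhds_zero.div_const 2))
  refine Tendsto.congr (fun U => ?_) (by simpa using h)
  rw [exp_neg]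
  field_simp

theorem stmt_15
    (a b σ : ℝ) (ha : 0 < a) (hσ : 0 < σ)
    (f₀ : ℝ → ℝ)
    (hf₀ : ∀ x, f₀ x = a / σ ^ 2 * Real.exp (-2 * a * |x - b| / σ ^ 2))
    (F₀ : ℝ → ℝ) (hF₀ : ∀ x, F₀ x = ∫ y in Iic x, f₀ y)
    (Φ : ℝ → ℝ≥0∞)
    (hΦ : ∀ x, Φ x = ∫⁻ y, ENNReal.ofReal
        (((Ioi x).indicator (fun _ => (1 : ℝ)) y - F₀ y) ^ 2 / (σ ^ 2 * f₀ y))) :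
    (∀ x, b ≤ x →
      (Φ x).toReal = σ ^ 2 / (2 * a ^ 2) *
        (Real.exp (2 * a * (x - b) / σ ^ 2) - 2 * a * (x - b) / σ ^ 2 - 1 / 2)) ∧
    Tendsto (fun x => (Φ x).toReal /
        (σ ^ 2 / (2 * a ^ 2) * Real.exp (2 * a * (x - b) / σ ^ 2)))
      atTop (𝓝 1) := by
  set c := 2 * a / σ ^ 2 with hc_def
  have hc : 0 < c := by positivity
  obtain rfl : f₀ = laplacePDF c b := funext fun y => by
    rw [hf₀, laplacePDF, hc_def]; ring_nf
  obtain rfl : F₀ = laplaceCDF c b := funext hF₀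
  have hΦ_integrand : ∀ x, Φ x = ∫⁻ y, ENNReal.ofReal (laplacePhiIntegrand c b x y / σ ^ 2) :=
    fun x => by simp_rw [hΦ, div_mul_eq_div_div_swap]; rfl
  have hΦ_eq : ∀ x, b ≤ x → (Φ x).toReal = σ ^ 2 / (2 * a ^ 2) *
      (exp (c * (x - b)) - c * (x - b) - 1 / 2) := by
    intro x hbx
    rw [hΦ_integrand, ← integral_eq_lintegral_of_nonneg_ae
      (Eventually.of_forall fun _ => div_nonneg (laplacePhiIntegrand_nonneg hc) (by positivity))
      ((integrable_laplacePhiIntegrand hc hbx).div_const _).aestronglyMeasurable,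
      integral_div, integral_laplacePhiIntegrand hc hbx, hc_def]
    field_simp
  have hc_mul : ∀ x, c * (x - b) = 2 * a * (x - b) / σ ^ 2 := fun x => by ring
  refine ⟨fun x hbx => by rw [hΦ_eq x hbx, hc_mul], ?_⟩
  have hU : Tendsto (fun x => c * (x - b)) atTop atTop :=
    (tendsto_atTop_add_const_right atTop (-b) tendsto_id).const_mul_atTop hc
  refine (tendsto_exp_sub_self_sub_half_div_exp.comp hU).congr' ?_
  filter_upwards [eventually_ge_atTop b] with x hbx
  rw [Function.comp_apply, hΦ_eq x hbx, hc_mul, mul_div_mul_left _ _ (by positivity)]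
end

section
/- Let S₀ : ℝ → ℝ be locally integrable with G₀ = ∫_ℝ exp(2∫_0^y S₀(z) dz) dy < ∞, and suppose the density f₀(x) = G₀^{−1} exp(2∫_0^x S₀(z) dz) is bounded on ℝ. Fix α ∈ ℝ and for n = 1, 2, … set S_n(x) = S₀(x) + α cos(n x), G_n = ∫_ℝ exp(2∫_0^y S_n(z) dz) dy and f_n(x) = G_n^{−1} exp(2∫_0^x S_n(z) dz). Then G_n < ∞ for every n, sup_{x ∈ ℝ} |f_n(x) − f₀(x)| → 0 as n → ∞, and consequently ∫_ℝ (f_n(x) − f₀(x))² f₀(x) dx → 0 as n → ∞. -/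
/-!
The potential of `S₀ + α cos (n ·)` differs from that of `S₀` by `2α sin (n x) / n`, uniformly
`O(1/n)`. Perturbing the log of an unnormalised density by at most `ε` pointwise moves its
normalising constant by a factor in `[e^{-ε}, e^{ε}]`, so the normalised densities differ by a
factor in `[e^{-2ε}, e^{2ε}]`; since `f₀ ≤ B` this gives uniform convergence, and the weighted
`L²` distance is at most the square of the sup distance times `∫ f₀`.
-/

open MeasureTheory Set Filter Topology Real

section GibbsDensity

variable {α : Type*} [MeasurableSpace α] {μ : Measure α}

noncomputable def gibbsDensity (μ : Measure α) (V : α → ℝ) (x : α) : ℝ :=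
  (∫ y, exp (V y) ∂μ)⁻¹ * exp (V x)

lemma gibbsDensity_nonneg (μ : Measure α) (V : α → ℝ) : 0 ≤ gibbsDensity μ V := fun x => by
  unfold gibbsDensity
  positivity

lemma integrable_gibbsDensity {V : α → ℝ} (hV : Integrable (fun y => exp (V y)) μ) :
    Integrable (gibbsDensity μ V) μ :=
  hV.const_mul _

lemma exp_le_exp_mul_exp_of_abs_sub_le {a b ε : ℝ} (h : |a - b| ≤ ε) :
    exp a ≤ exp ε * exp b := by
  rw [← exp_add]
  exact exp_le_exp.2 (by linarith [(abs_le.1 h).2])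

lemma integrable_exp_of_abs_sub_le {V₀ V₁ : α → ℝ} {ε : ℝ}
    (h₀ : Integrable (fun y => exp (V₀ y)) μ) (h₁ : AEStronglyMeasurable V₁ μ)
    (hV : ∀ x, |V₁ x - V₀ x| ≤ ε) : Integrable (fun y => exp (V₁ y)) μ :=
  (h₀.const_mul (exp ε)).mono' (continuous_exp.comp_aestronglyMeasurable h₁)
    (Eventually.of_forall fun x => by
      simpa only [norm_eq_abs, abs_exp] using exp_le_exp_mul_exp_of_abs_sub_le (hV x))

lemma gibbsDensity_le_exp_mul [NeZero μ] {V₀ V₁ : α → ℝ} {ε : ℝ}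
    (h₀ : Integrable (fun y => exp (V₀ y)) μ) (h₁ : Integrable (fun y => exp (V₁ y)) μ)
    (hV : ∀ x, |V₁ x - V₀ x| ≤ ε) (x : α) :
    gibbsDensity μ V₁ x ≤ exp (2 * ε) * gibbsDensity μ V₀ x := by
  have hZ₀ := integral_exp_pos h₀
  have hZ₁ := integral_exp_pos h₁
  have hZ : ∫ y, exp (V₀ y) ∂μ ≤ exp ε * ∫ y, exp (V₁ y) ∂μ := by
    rw [← integral_const_mul]
    exact integral_mono h₀ (h₁.const_mul _) fun y =>
      exp_le_exp_mul_exp_of_abs_sub_le (by rw [abs_sub_comm]; exact hV y)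
  have hZinv : (∫ y, exp (V₁ y) ∂μ)⁻¹ ≤ exp ε * (∫ y, exp (V₀ y) ∂μ)⁻¹ := by
    rw [← div_eq_mul_inv, le_div_iff₀ hZ₀, mul_comm, ← div_eq_mul_inv, div_le_iff₀ hZ₁]
    exact hZ
  calc gibbsDensity μ V₁ x
      ≤ (exp ε * (∫ y, exp (V₀ y) ∂μ)⁻¹) * (exp ε * exp (V₀ x)) :=
        mul_le_mul hZinv (exp_le_exp_mul_exp_of_abs_sub_le (hV x)) (exp_pos _).le
          (by positivity)
    _ = exp (2 * ε) * gibbsDensity μ V₀ x := by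
        rw [gibbsDensity, two_mul, exp_add]
        ring

lemma abs_gibbsDensity_sub_le [NeZero μ] {V₀ V₁ : α → ℝ} {ε : ℝ}
    (h₀ : Integrable (fun y => exp (V₀ y)) μ) (h₁ : Integrable (fun y => exp (V₁ y)) μ)
    (hV : ∀ x, |V₁ x - V₀ x| ≤ ε) (x : α) :
    |gibbsDensity μ V₁ x - gibbsDensity μ V₀ x| ≤ (exp (2 * ε) - 1) * gibbsDensity μ V₀ x := by
  have hup := gibbsDensity_le_exp_mul h₀ h₁ hV x
  have hlow := gibbsDensity_le_exp_mul h₁ h₀ (fun y => by rw [abs_sub_comm]; exact hV y) x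
  have hε : 1 ≤ exp (2 * ε) := one_le_exp (by linarith [(abs_nonneg _).trans (hV x)])
  have hf₀ := gibbsDensity_nonneg μ V₀ x
  have hf₁ := gibbsDensity_nonneg μ V₁ x
  rw [abs_le]
  constructor <;> nlinarith [mul_nonneg (sub_nonneg.2 hε) (sub_nonneg.2 hε)]

end GibbsDensity

section Uniform

variable {ι : Type*} {l : Filter ι} {δ : ι → ℝ}

lemma tendsto_iSup_abs_of_abs_le {κ : Type*} [Nonempty κ] {g : ι → κ → ℝ}
    (hδ : Tendsto δ l (𝓝 0)) (hg : ∀ᶠ i in l, ∀ x, |g i x| ≤ δ i) :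
    Tendsto (fun i => ⨆ x, |g i x|) l (𝓝 0) :=
  tendsto_of_tendsto_of_tendsto_of_le_of_le' tendsto_const_nhds hδ
    (Eventually.of_forall fun _ => Real.iSup_nonneg fun _ => abs_nonneg _)
    (hg.mono fun _ hi => ciSup_le hi)

lemma tendsto_integral_sq_mul_of_abs_le {α : Type*} [MeasurableSpace α] {μ : Measure α}
    {w : α → ℝ} {g : ι → α → ℝ} (hw : Integrable w μ) (hw₀ : 0 ≤ w)
    (hδ : Tendsto δ l (𝓝 0)) (hg : ∀ᶠ i in l, ∀ x, |g i x| ≤ δ i) :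
    Tendsto (fun i => ∫ x, g i x ^ 2 * w x ∂μ) l (𝓝 0) := by
  have hδ' : Tendsto (fun i => δ i ^ 2 * ∫ x, w x ∂μ) l (𝓝 0) := by
    simpa using (hδ.pow 2).mul_const (∫ x, w x ∂μ)
  have hnonneg (i : ι) : 0 ≤ᵐ[μ] fun x => g i x ^ 2 * w x :=
    Eventually.of_forall fun x => mul_nonneg (sq_nonneg _) (hw₀ x)
  refine tendsto_of_tendsto_of_tendsto_of_le_of_le' tendsto_const_nhds hδ'
    (Eventually.of_forall fun i => integral_nonneg_of_ae (hnonneg i)) (hg.mono fun i hi => ?_)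
  rw [← integral_const_mul]
  refine integral_mono_of_nonneg (hnonneg i) (hw.const_mul _) (Eventually.of_forall fun x => ?_)
  exact mul_le_mul_of_nonneg_right (sq_le_sq' (abs_le.1 (hi x)).1 (abs_le.1 (hi x)).2) (hw₀ x)

end Uniform

section DriftPotential

lemma MeasureTheory.LocallyIntegrable.intervalIntegrable {E : Type*} [NormedAddCommGroup E]
    {μ : Measure ℝ} {f : ℝ → E} (hf : LocallyIntegrable f μ) (a b : ℝ) :
    IntervalIntegrable f μ a b :=
  (hf.integrableOn_isCompact isCompact_uIcc).intervalIntegrable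

/-- `exp ∘ driftPotential S` is the speed density of `dX = S(X) dt + dW`, so the invariant density
is `gibbsDensity volume (driftPotential S)`. -/
noncomputable def driftPotential (S : ℝ → ℝ) (x : ℝ) : ℝ :=
  2 * ∫ z in (0 : ℝ)..x, S z

lemma continuous_driftPotential {S : ℝ → ℝ} (hS : LocallyIntegrable S) :
    Continuous (driftPotential S) :=
  continuous_const.mul (intervalIntegral.continuous_primitive hS.intervalIntegrable 0)

lemma driftPotential_add {S T : ℝ → ℝ} (hS : LocallyIntegrable S) (hT : LocallyIntegrable T)
    (x : ℝ) :
    driftPotential (fun z => S z + T z) x = driftPotential S x + driftPotential T x := by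
  rw [driftPotential, intervalIntegral.integral_add (hS.intervalIntegrable 0 x)
    (hT.intervalIntegrable 0 x), mul_add, driftPotential, driftPotential]

lemma driftPotential_const_mul_cos (a : ℝ) {ω : ℝ} (hω : ω ≠ 0) (x : ℝ) :
    driftPotential (fun z => a * cos (ω * z)) x = 2 * a * sin (ω * x) / ω := by
  rw [driftPotential, intervalIntegral.integral_const_mul,
    intervalIntegral.integral_comp_mul_left (fun z => cos z) hω, integral_cos, mul_zero, sin_zero,
    sub_zero, smul_eq_mul]
  field_simp

lemma abs_driftPotential_const_mul_cos_le (a : ℝ) {ω : ℝ} (hω : ω ≠ 0) (x : ℝ) :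
    |driftPotential (fun z => a * cos (ω * z)) x| ≤ 2 * |a| / |ω| := by
  rw [driftPotential_const_mul_cos a hω, abs_div, abs_mul, abs_mul, abs_two]
  gcongr ?_ / _
  exact mul_le_of_le_one_right (by positivity) (abs_sin_le_one _)

end DriftPotential

theorem stmt_16
    (S₀ : ℝ → ℝ) (hS₀ : LocallyIntegrable S₀)
    (hG₀ : Integrable (fun y => Real.exp (2 * ∫ z in (0:ℝ)..y, S₀ z)))
    (f₀ : ℝ → ℝ)
    (hf₀ : ∀ x, f₀ x =
      (∫ y, Real.exp (2 * ∫ z in (0:ℝ)..y, S₀ z))⁻¹ *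
        Real.exp (2 * ∫ z in (0:ℝ)..x, S₀ z))
    (B : ℝ) (hB : ∀ x, f₀ x ≤ B)
    (α : ℝ)
    (S : ℕ → ℝ → ℝ) (hS : ∀ n x, S n x = S₀ x + α * Real.cos (n * x))
    (f : ℕ → ℝ → ℝ)
    (hf : ∀ n x, f n x =
      (∫ y, Real.exp (2 * ∫ z in (0:ℝ)..y, S n z))⁻¹ *
        Real.exp (2 * ∫ z in (0:ℝ)..x, S n z)) :
    (∀ n : ℕ, 0 < n →
        Integrable (fun y => Real.exp (2 * ∫ z in (0:ℝ)..y, S n z))) ∧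
      Tendsto (fun n : ℕ => ⨆ x : ℝ, |f n x - f₀ x|) atTop (𝓝 0) ∧
      Tendsto (fun n : ℕ => ∫ x, (f n x - f₀ x) ^ 2 * f₀ x) atTop (𝓝 0) := by
  obtain rfl : f₀ = gibbsDensity volume (driftPotential S₀) := funext hf₀
  obtain rfl : f = fun n => gibbsDensity volume (driftPotential (S n)) := funext₂ hf
  obtain rfl : S = fun (n : ℕ) z => S₀ z + α * cos (n * z) := funext₂ hS
  have hcos (n : ℕ) : LocallyIntegrable fun z => α * cos (n * z) :=
    (by fun_prop : Continuous fun z : ℝ => α * cos (n * z)).locallyIntegrable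
  have hclose (n : ℕ) (hn : 0 < n) (x : ℝ) :
      |driftPotential (fun z => S₀ z + α * cos (n * z)) x - driftPotential S₀ x|
        ≤ 2 * |α| / n := by
    have hn' : (n : ℝ) ≠ 0 := Nat.cast_ne_zero.2 hn.ne'
    rw [driftPotential_add hS₀ (hcos n), add_sub_cancel_left]
    simpa only [Nat.abs_cast] using abs_driftPotential_const_mul_cos_le α hn' x
  have hint (n : ℕ) (hn : 0 < n) :
      Integrable fun y => exp (driftPotential (fun z => S₀ z + α * cos (n * z)) y) :=
    integrable_exp_of_abs_sub_le hG₀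
      (continuous_driftPotential (hS₀.add (hcos n))).aestronglyMeasurable (hclose n hn)
  have hunif : ∀ᶠ n : ℕ in atTop, ∀ x,
      |gibbsDensity volume (driftPotential (fun z => S₀ z + α * cos (n * z))) x
        - gibbsDensity volume (driftPotential S₀) x| ≤ (exp (2 * (2 * |α| / n)) - 1) * B := by
    filter_upwards [eventually_gt_atTop 0] with n hn x
    have hε : 0 ≤ exp (2 * (2 * |α| / n)) - 1 :=
      sub_nonneg.2 (one_le_exp (by positivity))
    exact (abs_gibbsDensity_sub_le hG₀ (hint n hn) (hclose n hn) x).trans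
      (mul_le_mul_of_nonneg_left (hB x) hε)
  have hδ : Tendsto (fun n : ℕ => (exp (2 * (2 * |α| / n)) - 1) * B) atTop (𝓝 0) := by
    have h : Tendsto (fun n : ℕ => 2 * (2 * |α| / n)) atTop (𝓝 0) := by
      simpa using (tendsto_const_div_atTop_nhds_zero_nat (2 * |α|)).const_mul 2
    simpa using (((continuous_exp.tendsto 0).comp h).sub_const 1).mul_const B
  exact ⟨hint, tendsto_iSup_abs_of_abs_le hδ hunif,
    tendsto_integral_sq_mul_of_abs_le (integrable_gibbsDensity hG₀)
      (gibbsDensity_nonneg _ _) hδ hunif⟩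
end
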